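/- The gap between the outer and inner bounds on the secrecy capacity vanishes as the in-block memory length grows: G(L) → 0 as L → ∞; equivalently, U(L) - I(L) → 0. -/

import Mathlib

open Finset Filter Topology

/-- Binary entropy function with base-2 logarithm. `Real.logb 2 0 = 0`, so
`H2 0 = H2 1 = 0` automatically. -/
noncomputable def H2 (p : ℝ) : ℝ :=
  -(p * Real.logb 2 p) - (1 - p) * Real.logb 2 (1 - p)

/-- Partial sums `s_j = ∑_{k=1}^j c_k` of the beam-budget sequence. -/
noncomputable def s (K B : ℝ) : ℕ → ℝ
  | 0 => 0
  | (j+1) => s K B j + min ((K - s K B j) / 2) B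

/-- The beam-budget sequence: `c_0 = 0` and `c_j = min((K - s_{j-1})/2, B)` for `j ≥ 1`. -/
noncomputable def c (K B : ℝ) : ℕ → ℝ
  | 0 => 0
  | (j+1) => min ((K - s K B j) / 2) B

/-- The `j`-th term of the outer bound (Theorem 1), for `j ≥ 1`. -/
noncomputable def t (K B : ℝ) (j : ℕ) : ℝ :=
  (1 - s K B (j-1) / K) * H2 (c K B j / (K - s K B (j-1))) + s K B (j-1) / K

/-- The outer-bound (Theorem 1) expression `U(L)`. -/
noncomputable def U (K B : ℝ) (L : ℕ) : ℝ :=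
  (1 / (L : ℝ)) * ∑ j ∈ Finset.Icc 1 L, t K B j

/-- The `j`-th eavesdropper-leakage term, for `j ≥ 1` (natural subtraction makes the
middle term vanish at `j = 1` and the final sum empty for `j ≤ 3`). -/
noncomputable def g (K B : ℝ) (j : ℕ) : ℝ :=
  ((K - s K B (j-1)) / K) * H2 (c K B j / K)
  + (c K B (j-1) * (K - s K B (j-2)) / K^2) *
      H2 ((1/2) * c K B (j-1) / (K - s K B (j-2)))
  + ∑ k ∈ Finset.Icc 1 (j-3),
      (1/K) * ((c K B (k+1))^2 / K^2) * (1/2 : ℝ)^(2*(j-k-2)-1)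

/-- The gap `G(L)` between the outer and inner bounds. -/
noncomputable def G (K B : ℝ) (L : ℕ) : ℝ :=
  (1 / (L : ℝ)) * ∑ j ∈ Finset.Icc 1 L, g K B j

/-- The inner-bound (Theorem 2) expression `I(L) = U(L) - G(L)`. -/
noncomputable def Ib (K B : ℝ) (L : ℕ) : ℝ := U K B L - G K B L

/-!
The remaining beam budget `K - s_j` contracts at every step by the factor
`q = budgetRatio K B = max (1/2) (1 - B/K) < 1`: either half of it is spent, or the full
per-symbol budget `B`, which is at least the fraction `B/K` of it. Hence `K - s_j ≤ K qʲ` and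
`c_{j+1} ≤ K qʲ / 2`. The first two terms of `g_j` are then `O(qʲ)`, and each of the `j - 3`
summands of the third is `O(q^{2j})`, so `g_j → 0`. The gap `G(L)` is the Cesàro mean of `g`,
so it tends to `0` too, and `U(L) - I(L) = G(L)`.
-/

lemma H2_eq_binEntropy_div_log (p : ℝ) : H2 p = Real.binEntropy p / Real.log 2 := by
  unfold H2 Real.binEntropy Real.logb
  rw [Real.log_inv, Real.log_inv]
  ring

lemma H2_nonneg {p : ℝ} (h0 : 0 ≤ p) (h1 : p ≤ 1) : 0 ≤ H2 p := by
  rw [H2_eq_binEntropy_div_log]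
  exact div_nonneg (Real.binEntropy_nonneg h0 h1) (Real.log_nonneg one_le_two)

lemma H2_le_one (p : ℝ) : H2 p ≤ 1 := by
  rw [H2_eq_binEntropy_div_log, div_le_one (Real.log_pos one_lt_two)]
  exact Real.binEntropy_le_log_two

noncomputable def budgetRatio (K B : ℝ) : ℝ := max (1/2) (1 - B/K)

section BeamBudget

variable {K B : ℝ}

lemma half_le_budgetRatio : 1/2 ≤ budgetRatio K B := le_max_left _ _

lemma budgetRatio_nonneg : 0 ≤ budgetRatio K B :=
  le_trans (by norm_num) half_le_budgetRatio

lemma budgetRatio_lt_one (hK : 0 < K) (hB : 0 < B) : budgetRatio K B < 1 :=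
  max_lt (by norm_num) (sub_lt_self 1 (div_pos hB hK))

lemma s_succ (j : ℕ) : s K B (j+1) = s K B j + c K B (j+1) := rfl

lemma c_succ_le (j : ℕ) : c K B (j+1) ≤ (K - s K B j) / 2 := min_le_left _ _

lemma sub_s_nonneg (hK : 0 ≤ K) (j : ℕ) : 0 ≤ K - s K B j := by
  induction j with
  | zero => simpa [s] using hK
  | succ j ih => linarith [s_succ (K := K) (B := B) j, c_succ_le (K := K) (B := B) j]

lemma c_le_half_sub_s_pred (hK : 0 ≤ K) (j : ℕ) : c K B j ≤ (K - s K B (j-1)) / 2 := by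
  cases j with
  | zero => show (0 : ℝ) ≤ (K - 0) / 2; linarith
  | succ j => exact c_succ_le j

lemma c_nonneg (hK : 0 ≤ K) (hB : 0 ≤ B) (j : ℕ) : 0 ≤ c K B j := by
  cases j with
  | zero => exact le_rfl
  | succ j => exact le_min (by linarith [sub_s_nonneg (B := B) hK j]) hB

lemma s_nonneg (hK : 0 ≤ K) (hB : 0 ≤ B) (j : ℕ) : 0 ≤ s K B j := by
  induction j with
  | zero => exact le_rfl
  | succ j ih => rw [s_succ]; linarith [c_nonneg hK hB (j+1)]

lemma c_le_half (hK : 0 ≤ K) (hB : 0 ≤ B) (j : ℕ) : c K B j ≤ K / 2 := by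
  linarith [c_le_half_sub_s_pred (B := B) hK j, s_nonneg hK hB (j-1)]

lemma sub_s_succ_le (hK : 0 < K) (hB : 0 ≤ B) (j : ℕ) :
    K - s K B (j+1) ≤ budgetRatio K B * (K - s K B j) := by
  have hstep : K - s K B (j+1) = (K - s K B j) - min ((K - s K B j) / 2) B := by
    rw [s_succ, c]; ring
  rw [hstep]
  set d := K - s K B j
  have hd : 0 ≤ d := sub_s_nonneg hK.le j
  have hdK : d ≤ K := by linarith [s_nonneg hK.le hB j]
  rcases le_total (d / 2) B with h | h
  · rw [min_eq_left h]
    nlinarith [half_le_budgetRatio (K := K) (B := B)]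
  · rw [min_eq_right h]
    have hBd : B / K * d ≤ B := by
      rw [div_mul_eq_mul_div, div_le_iff₀ hK]
      exact mul_le_mul_of_nonneg_left hdK hB
    have hq : 1 - B / K ≤ budgetRatio K B := le_max_right _ _
    nlinarith

lemma sub_s_le_pow (hK : 0 < K) (hB : 0 ≤ B) (j : ℕ) :
    K - s K B j ≤ K * budgetRatio K B ^ j := by
  induction j with
  | zero => simp [s]
  | succ j ih =>
    calc K - s K B (j+1) ≤ budgetRatio K B * (K - s K B j) := sub_s_succ_le hK hB j
      _ ≤ budgetRatio K B * (K * budgetRatio K B ^ j) :=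
        mul_le_mul_of_nonneg_left ih budgetRatio_nonneg
      _ = K * budgetRatio K B ^ (j+1) := by ring

lemma c_succ_le_pow (hK : 0 < K) (hB : 0 ≤ B) (j : ℕ) :
    c K B (j+1) ≤ K * budgetRatio K B ^ j / 2 := by
  linarith [c_succ_le (K := K) (B := B) j, sub_s_le_pow hK hB j]

lemma g_nonneg (hK : 0 < K) (hB : 0 ≤ B) (j : ℕ) : 0 ≤ g K B j := by
  have hc := c_nonneg hK.le hB
  have hd := sub_s_nonneg (B := B) hK.le
  have first : 0 ≤ ((K - s K B (j-1)) / K) * H2 (c K B j / K) := by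
    refine mul_nonneg (div_nonneg (hd _) hK.le) (H2_nonneg (div_nonneg (hc j) hK.le) ?_)
    exact div_le_one_of_le₀ (by linarith [c_le_half hK.le hB j]) hK.le
  have second : 0 ≤ (c K B (j-1) * (K - s K B (j-2)) / K^2) *
      H2 ((1/2) * c K B (j-1) / (K - s K B (j-2))) := by
    refine mul_nonneg (by positivity [hc (j-1), hd (j-2)])
      (H2_nonneg (by positivity [hc (j-1), hd (j-2)]) (div_le_one_of_le₀ ?_ (hd _)))
    have := c_le_half_sub_s_pred (B := B) hK.le (j-1)
    rw [Nat.sub_sub] at this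
    linarith [hc (j-1), hd (j-2)]
  have third : 0 ≤ ∑ k ∈ Icc 1 (j-3),
      (1/K) * ((c K B (k+1))^2 / K^2) * (1/2 : ℝ)^(2*(j-k-2)-1) :=
    sum_nonneg fun k _ => by positivity
  unfold g
  linarith

lemma half_pow_two_mul_sub_one_le (n : ℕ) : (1/2 : ℝ) ^ (2*n - 1) ≤ 2 * (1/2) ^ (2*n) := by
  cases n with
  | zero => norm_num
  | succ n =>
    rw [show 2 * (n+1) = (2*n + 1) + 1 by ring, Nat.add_sub_cancel]
    exact le_of_eq (by ring)

lemma leakage_summand_le (hK : 0 < K) (hB : 0 ≤ B) {j k : ℕ} (hk : k ≤ j - 2) :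
    (1/K) * ((c K B (k+1))^2 / K^2) * (1/2 : ℝ)^(2*(j-k-2)-1)
      ≤ (budgetRatio K B ^ 2) ^ (j-2) / (2*K) := by
  set q := budgetRatio K B
  set n := j - k - 2
  have hkn : k + n = j - 2 := by omega
  have hc : (c K B (k+1) / K)^2 ≤ (q^k / 2)^2 := by
    refine pow_le_pow_left₀ (div_nonneg (c_nonneg hK.le hB _) hK.le) ?_ 2
    rw [div_le_iff₀ hK]
    linarith [c_succ_le_pow hK hB k]
  have hhalf : (1/2 : ℝ) ^ (2*n - 1) ≤ 2 * q ^ (2*n) :=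
    (half_pow_two_mul_sub_one_le n).trans <| by
      gcongr
      exact half_le_budgetRatio
  calc (1/K) * ((c K B (k+1))^2 / K^2) * (1/2 : ℝ)^(2*n-1)
      = (1/K) * (c K B (k+1) / K)^2 * (1/2 : ℝ)^(2*n-1) := by rw [div_pow (c K B (k+1))]
    _ ≤ (1/K) * (q^k / 2)^2 * (2 * q ^ (2*n)) := by
        gcongr
    _ = (q^2) ^ (k+n) / (2*K) := by
        rw [pow_add, ← pow_mul, ← pow_mul]
        field_simp
        ring
    _ = (q^2) ^ (j-2) / (2*K) := by rw [hkn]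

lemma g_le (hK : 0 < K) (hB : 0 ≤ B) (j : ℕ) :
    g K B j ≤ budgetRatio K B ^ (j-1) + budgetRatio K B ^ (j-2) / 2
      + ((j-2 : ℕ) : ℝ) * ((budgetRatio K B ^ 2) ^ (j-2) / (2*K)) := by
  set q := budgetRatio K B
  have hd := sub_s_nonneg (B := B) hK.le
  have hc := c_nonneg hK.le hB
  have first : ((K - s K B (j-1)) / K) * H2 (c K B j / K) ≤ q ^ (j-1) := by
    calc ((K - s K B (j-1)) / K) * H2 (c K B j / K) ≤ (K - s K B (j-1)) / K :=
          mul_le_of_le_one_right (div_nonneg (hd _) hK.le) (H2_le_one _)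
      _ ≤ q ^ (j-1) := by
          rw [div_le_iff₀ hK]
          linarith [sub_s_le_pow hK hB (j-1)]
  have second : (c K B (j-1) * (K - s K B (j-2)) / K^2) *
      H2 ((1/2) * c K B (j-1) / (K - s K B (j-2))) ≤ q ^ (j-2) / 2 := by
    calc (c K B (j-1) * (K - s K B (j-2)) / K^2) *
          H2 ((1/2) * c K B (j-1) / (K - s K B (j-2)))
          ≤ c K B (j-1) * (K - s K B (j-2)) / K^2 :=
          mul_le_of_le_one_right (by positivity [hc (j-1), hd (j-2)]) (H2_le_one _)
      _ ≤ (K / 2) * (K * q ^ (j-2)) / K^2 := by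
          refine div_le_div_of_nonneg_right ?_ (by positivity)
          exact mul_le_mul (c_le_half hK.le hB _) (sub_s_le_pow hK hB _) (hd _) (by positivity)
      _ = q ^ (j-2) / 2 := by field_simp
  have third : ∑ k ∈ Icc 1 (j-3),
      (1/K) * ((c K B (k+1))^2 / K^2) * (1/2 : ℝ)^(2*(j-k-2)-1)
      ≤ ((j-2 : ℕ) : ℝ) * ((q ^ 2) ^ (j-2) / (2*K)) := by
    refine (sum_le_card_nsmul _ _ _ fun k hk =>
      leakage_summand_le hK hB (by simp only [mem_Icc] at hk; omega)).trans ?_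
    rw [nsmul_eq_mul, Nat.card_Icc]
    refine mul_le_mul_of_nonneg_right ?_ (by positivity)
    exact_mod_cast (by omega : j - 3 + 1 - 1 ≤ j - 2)
  unfold g
  linarith

lemma tendsto_g_atTop_zero (hK : 0 < K) (hB : 0 < B) : Tendsto (g K B) atTop (𝓝 0) := by
  set q := budgetRatio K B
  have hq0 : 0 ≤ q := budgetRatio_nonneg
  have hq1 : q < 1 := budgetRatio_lt_one hK hB
  have hpow := tendsto_pow_atTop_nhds_zero_of_lt_one hq0 hq1
  have first := hpow.comp (tendsto_sub_atTop_nat 1)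
  have second := (hpow.div_const 2).comp (tendsto_sub_atTop_nat 2)
  have third := ((tendsto_self_mul_const_pow_of_lt_one (by positivity : 0 ≤ q^2)
    (pow_lt_one₀ hq0 hq1 two_ne_zero)).div_const (2*K)).comp (tendsto_sub_atTop_nat 2)
  have bound := (first.add second).add third
  simp only [zero_div, add_zero] at bound
  refine squeeze_zero (g_nonneg hK hB.le) (fun j => ?_) bound
  simpa only [Function.comp_apply, mul_div_assoc] using g_le hK hB.le j

lemma G_eq_inv_mul_sum_range (L : ℕ) :
    G K B L = (L : ℝ)⁻¹ * ∑ i ∈ range L, g K B (i+1) := by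
  rw [G, one_div, range_eq_Ico, sum_Ico_add' (g K B) 0 L 1, zero_add,
    Ico_add_one_right_eq_Icc]

lemma tendsto_G_atTop_zero (hK : 0 < K) (hB : 0 < B) : Tendsto (G K B) atTop (𝓝 0) := by
  have hshift : Tendsto (fun i => g K B (i+1)) atTop (𝓝 0) :=
    (tendsto_g_atTop_zero hK hB).comp (tendsto_add_atTop_nat 1)
  exact hshift.cesaro.congr fun L => (G_eq_inv_mul_sum_range L).symm

end BeamBudget

theorem stmt_15 (K : ℕ) (hK : 2 ≤ K) (B : ℝ) (hB : 0 < B) :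
    Tendsto (fun L : ℕ => G K B L) atTop (𝓝 0) ∧
    Tendsto (fun L : ℕ => U K B L - Ib K B L) atTop (𝓝 0) := by
  have hG := tendsto_G_atTop_zero (K := (K : ℝ)) (Nat.cast_pos.mpr (by omega)) hB
  refine ⟨hG, ?_⟩
  simpa only [Ib, sub_sub_cancel] using hG
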